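/- Every vertex of the Larson boundary ∂_L(G) belongs to N(I) for every maximum critical independent set I of G. -/
import Mathlib


open Finset

variable {V : Type*} [Fintype V] [DecidableEq V] (G : SimpleGraph V) [DecidableRel G.Adj]

/-- `N(S)`: the set of vertices adjacent to some vertex of `S`. -/
def nbhd (S : Finset V) : Finset V := S.biUnion (fun v => G.neighborFinset v)

/-- `S` is an independent set of `G`. -/
def Indep (S : Finset V) : Prop := ∀ u ∈ S, ∀ v ∈ S, ¬ G.Adj u v

/-- The difference `d_G(S) = |S| - |N(S)|`. -/
def diffI (S : Finset V) : ℤ := (S.card : ℤ) - ((nbhd G S).card : ℤ)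

/-- `S` is a maximum independent set of `G`. -/
def IsMaxIndep (S : Finset V) : Prop :=
  Indep G S ∧ ∀ T : Finset V, Indep G T → T.card ≤ S.card

/-- `I` is a critical independent set of `G`. -/
def IsCritIndep (I : Finset V) : Prop :=
  Indep G I ∧ ∀ J : Finset V, Indep G J → diffI G J ≤ diffI G I

/-- `I` is a maximum critical independent set of `G`. -/
def IsMaxCritIndep (I : Finset V) : Prop :=
  IsCritIndep G I ∧ ∀ J : Finset V, IsCritIndep G J → J.card ≤ I.card

/-- `core(G)`: intersection of all maximum independent sets. -/
def core : Set V := {v | ∀ S : Finset V, IsMaxIndep G S → v ∈ S}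

/-- `corona(G)`: union of all maximum independent sets. -/
def corona : Set V := {v | ∃ S : Finset V, IsMaxIndep G S ∧ v ∈ S}

/-- `nucleus(G)`: intersection of all maximum critical independent sets. -/
def nucleus : Set V := {v | ∀ S : Finset V, IsMaxCritIndep G S → v ∈ S}

/-- `diadem(G)`: union of all maximum critical independent sets. -/
def diadem : Set V := {v | ∃ S : Finset V, IsMaxCritIndep G S ∧ v ∈ S}

/-- `ker(G)`: intersection of all critical independent sets. -/
def kerS : Set V := {v | ∀ S : Finset V, IsCritIndep G S → v ∈ S}

/-- A matching of `G`, given as an involution of the vertex set: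
unmatched vertices are fixed points, matched vertices are sent to their partner. -/
def IsMatching (M : V → V) : Prop :=
  Function.Involutive M ∧ ∀ v, M v ≠ v → G.Adj v (M v)

/-- Twice the number of edges of the matching `M`, i.e. the number of matched vertices. -/
def matchSize (M : V → V) : ℕ := (univ.filter fun v => M v ≠ v).card

/-- `M` is a maximum matching of `G`. -/
def IsMaxMatching (M : V → V) : Prop :=
  IsMatching G M ∧ ∀ M' : V → V, IsMatching G M' → matchSize M' ≤ matchSize M

/-- `M` is a matching of the induced subgraph `G[L]`. -/
def IsMatchingOn (L : Finset V) (M : V → V) : Prop :=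
  IsMatching G M ∧ ∀ v, M v ≠ v → v ∈ L

/-- `M` is a maximum matching of the induced subgraph `G[L]`. -/
def IsMaxMatchingOn (L : Finset V) (M : V → V) : Prop :=
  IsMatchingOn G L M ∧ ∀ M' : V → V, IsMatchingOn G L M' → matchSize M' ≤ matchSize M

/-- `S` is a maximum independent set of the induced subgraph `G[L]`. -/
def IsMaxIndepOn (L : Finset V) (S : Finset V) : Prop :=
  S ⊆ L ∧ Indep G S ∧ ∀ T : Finset V, T ⊆ L → Indep G T → T.card ≤ S.card

/-- `core` of the induced subgraph `G[L]`. -/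
def coreOn (L : Finset V) : Set V := {v | ∀ S : Finset V, IsMaxIndepOn G L S → v ∈ S}

/-- `D(G[L])`: vertices of `L` missed by some maximum matching of `G[L]`. -/
def Dset (L : Finset V) : Set V := {v | v ∈ L ∧ ∃ M : V → V, IsMaxMatchingOn G L M ∧ M v = v}

/-- The Larson boundary `∂_L(G)` of the set `L`. -/
def boundaryL (L : Finset V) : Set V := {v | v ∈ L ∧ ∃ w, w ∉ L ∧ G.Adj v w}

/-- The critical difference `d(G)`. -/
noncomputable def critDiff : ℤ := sSup {d : ℤ | ∃ X : Finset V, diffI G X = d}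

/-- The difference of `S` computed in the induced subgraph `G[L]`. -/
def diffOn (L : Finset V) (S : Finset V) : ℤ := (S.card : ℤ) - ((nbhd G S ∩ L).card : ℤ)

/-- The critical difference of the induced subgraph `G[L]`. -/
noncomputable def critDiffOn (L : Finset V) : ℤ := sSup {d : ℤ | ∃ X : Finset V, X ⊆ L ∧ diffOn G L X = d}

/-- `G` is a König–Egerváry graph: `α(G) + μ(G) = |V(G)|`. -/
def KonigEgervary : Prop :=
  ∃ (S : Finset V) (M : V → V), IsMaxIndep G S ∧ IsMaxMatching G M ∧
    2 * S.card + matchSize M = 2 * Fintype.card V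

/- ===== auxiliary lemmas ===== -/

lemma mem_nbhd {S : Finset V} {v : V} : v ∈ nbhd G S ↔ ∃ u ∈ S, G.Adj u v := by
  simp [nbhd, SimpleGraph.mem_neighborFinset]

lemma nbhd_mono {S T : Finset V} (h : S ⊆ T) : nbhd G S ⊆ nbhd G T := by
  intro v hv
  rw [mem_nbhd] at hv ⊢
  obtain ⟨u, hu, ha⟩ := hv
  exact ⟨u, h hu, ha⟩

lemma indep_subset {S T : Finset V} (h : Indep G T) (hs : S ⊆ T) : Indep G S :=
  fun u hu v hv => h u (hs hu) v (hs hv)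

lemma supermod (A B : Finset V) :
    diffI G A + diffI G B ≤ diffI G (A ∩ B) + diffI G (A ∪ B) := by
  have h1 : (A ∩ B).card + (A ∪ B).card = A.card + B.card :=
    Finset.card_inter_add_card_union A B
  have h2 : nbhd G (A ∪ B) = nbhd G A ∪ nbhd G B := by
    ext v
    simp only [mem_nbhd, Finset.mem_union]
    constructor
    · rintro ⟨u, hu | hu, ha⟩
      · exact Or.inl ⟨u, hu, ha⟩
      · exact Or.inr ⟨u, hu, ha⟩
    · rintro (⟨u, hu, ha⟩ | ⟨u, hu, ha⟩)
      · exact ⟨u, Or.inl hu, ha⟩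
      · exact ⟨u, Or.inr hu, ha⟩
  have h3 : nbhd G (A ∩ B) ⊆ nbhd G A ∩ nbhd G B := by
    intro v hv
    rw [Finset.mem_inter]
    exact ⟨nbhd_mono G Finset.inter_subset_left hv,
           nbhd_mono G Finset.inter_subset_right hv⟩
  have h4 : (nbhd G (A ∩ B)).card + (nbhd G (A ∪ B)).card
      ≤ (nbhd G A).card + (nbhd G B).card := by
    have h5 := Finset.card_inter_add_card_union (nbhd G A) (nbhd G B)
    have h6 := Finset.card_le_card h3
    rw [h2]
    omega
  unfold diffI
  omega

/-- The key uniqueness lemma: `I ∪ N(I)` is the same for all maximum critical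
independent sets. -/
lemma L_subset (I : Finset V) (hI : IsMaxCritIndep G I)
    (J : Finset V) (hJ : IsMaxCritIndep G J) :
    I ∪ nbhd G I ⊆ J ∪ nbhd G J := by
  obtain ⟨⟨hIi, hIc⟩, _⟩ := hI
  obtain ⟨⟨hJi, hJc⟩, hJmax⟩ := hJ
  have hdJI : diffI G J = diffI G I :=
    le_antisymm (hIc J hJi) (hJc I hIi)
  set d : ℤ := diffI G I with hd
  set X : Finset V := I ∪ J with hX
  set Y : Finset V := X \ nbhd G X with hY
  -- Y is independent
  have hYsub : Y ⊆ X := Finset.sdiff_subset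
  have hYi : Indep G Y := by
    intro u hu v hv hadj
    have hvN : v ∈ nbhd G X := (mem_nbhd G).mpr ⟨u, hYsub hu, hadj⟩
    exact (Finset.mem_sdiff.mp hv).2 hvN
  -- N(Y) ⊆ N(X) \ X
  have hNY : nbhd G Y ⊆ nbhd G X \ X := by
    intro v hv
    obtain ⟨y, hy, hadj⟩ := (mem_nbhd G).mp hv
    rw [Finset.mem_sdiff]
    refine ⟨nbhd_mono G hYsub hv, fun hvX => ?_⟩
    exact (Finset.mem_sdiff.mp hy).2 ((mem_nbhd G).mpr ⟨v, hvX, hadj.symm⟩)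
  -- cardinality bookkeeping
  have hcY : Y.card + (X ∩ nbhd G X).card = X.card := by
    rw [hY]
    have := Finset.card_inter_add_card_sdiff X (nbhd G X)
    omega
  have hcN : (nbhd G X \ X).card + (nbhd G X ∩ X).card = (nbhd G X).card := by
    have := Finset.card_inter_add_card_sdiff (nbhd G X) X
    omega
  have hIcom : (X ∩ nbhd G X).card = (nbhd G X ∩ X).card := by
    rw [Finset.inter_comm]
  -- d(Y) ≥ d(X)
  have hNYcard : (nbhd G Y).card ≤ (nbhd G X \ X).card := Finset.card_le_card hNY
  have hYX : diffI G X ≤ diffI G Y := by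
    unfold diffI
    omega
  -- d(X) ≥ d via supermodularity
  have hsm := supermod G I J
  have hIJi : Indep G (I ∩ J) := indep_subset G hIi Finset.inter_subset_left
  have hIJd : diffI G (I ∩ J) ≤ d := hIc _ hIJi
  have hXd : d ≤ diffI G X := by rw [hX]; omega
  have hYd : diffI G Y = d := le_antisymm (hIc Y hYi) (le_trans hXd hYX)
  have hXdeq : diffI G X = d := le_antisymm (by omega) hXd
  -- tightness : N(Y) = N(X) \ X
  have hNYeq : nbhd G Y = nbhd G X \ X := by
    apply Finset.eq_of_subset_of_card_le hNY
    have h1 : (Y.card : ℤ) - (nbhd G Y).card = d := hYd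
    have h2 : (X.card : ℤ) - (nbhd G X).card = d := hXdeq
    omega
  -- J ∪ Y is independent
  have hJYi : Indep G (J ∪ Y) := by
    intro u hu v hv hadj
    rcases Finset.mem_union.mp hu with hu | hu <;>
      rcases Finset.mem_union.mp hv with hv | hv
    · exact hJi u hu v hv hadj
    · exact (Finset.mem_sdiff.mp hv).2
        ((mem_nbhd G).mpr ⟨u, Finset.mem_union_right I hu, hadj⟩)
    · exact (Finset.mem_sdiff.mp hu).2
        ((mem_nbhd G).mpr ⟨v, Finset.mem_union_right I hv, hadj.symm⟩)
    · exact hYi u hu v hv hadj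
  -- J ∪ Y is critical, hence Y ⊆ J by maximality of J
  have hsm2 := supermod G J Y
  have hJYint : diffI G (J ∩ Y) ≤ d := hIc _ (indep_subset G hJi Finset.inter_subset_left)
  have hJYd : diffI G (J ∪ Y) = d := by
    have := hIc (J ∪ Y) hJYi
    omega
  have hJYcrit : IsCritIndep G (J ∪ Y) :=
    ⟨hJYi, fun T hT => by rw [hJYd]; exact hIc T hT⟩
  have hYJ : Y ⊆ J := by
    have hle : (J ∪ Y).card ≤ J.card := hJmax _ hJYcrit
    have : J ∪ Y = J :=
      (Finset.eq_of_subset_of_card_le Finset.subset_union_left hle).symm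
    intro y hy
    rw [← this]
    exact Finset.mem_union_right J hy
  -- main inclusion
  intro v hv
  by_contra hvJ
  rw [Finset.mem_union] at hvJ
  push_neg at hvJ
  obtain ⟨hvJ1, hvJ2⟩ := hvJ
  have hvI : v ∈ I := by
    rcases Finset.mem_union.mp hv with hvI | hvNI
    · exact hvI
    · -- v ∈ N(I) ⊆ N(X); v ∉ N(Y) since N(Y) ⊆ N(J); so v ∈ X, hence v ∈ I
      have hvNX : v ∈ nbhd G X := nbhd_mono G Finset.subset_union_left hvNI
      have hvNYn : v ∉ nbhd G Y := fun h => hvJ2 (nbhd_mono G hYJ h)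
      have : v ∉ nbhd G X \ X := by rw [← hNYeq]; exact hvNYn
      have hvX : v ∈ X := by
        by_contra hvX
        exact this (Finset.mem_sdiff.mpr ⟨hvNX, hvX⟩)
      rcases Finset.mem_union.mp hvX with h | h
      · exact h
      · exact absurd h hvJ1
  -- v ∈ I, v ∉ J, v ∉ N(J): v ∉ Y (since Y ⊆ J), so v ∈ N(X) = N(I) ∪ N(J)
  have hvX : v ∈ X := Finset.mem_union_left J hvI
  have hvY : v ∉ Y := fun h => hvJ1 (hYJ h)
  have hvNX : v ∈ nbhd G X := by
    by_contra h
    exact hvY (Finset.mem_sdiff.mpr ⟨hvX, h⟩)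
  obtain ⟨u, hu, hadj⟩ := (mem_nbhd G).mp hvNX
  rcases Finset.mem_union.mp hu with huI | huJ
  · exact hIi u huI v hvI hadj.symm.symm |>.elim
  · exact hvJ2 ((mem_nbhd G).mpr ⟨u, huJ, hadj⟩)

theorem stmt18 (I : Finset V) (hI : IsMaxCritIndep G I)
    (J : Finset V) (hJ : IsMaxCritIndep G J) :
    boundaryL G (I ∪ nbhd G I) ⊆ ↑(nbhd G J) := by
  intro v hv
  obtain ⟨hvL, w, hw, hadj⟩ := hv
  have hLIJ := L_subset G I hI J hJ
  have hLJI := L_subset G J hJ I hI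
  rw [Finset.mem_coe]
  rcases Finset.mem_union.mp (hLIJ hvL) with hvJ | hvNJ
  · -- v ∈ J, so w ∈ N(J) ⊆ J ∪ N(J) ⊆ I ∪ N(I), contradiction
    exact absurd (hLJI (Finset.mem_union_right J
      ((mem_nbhd G).mpr ⟨v, hvJ, hadj⟩))) hw
  · exact hvNJ
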